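/- arXiv:cs/0205044 — 2 statements merged into one kernel-verified Lean document; each statement's English description precedes it below -/
import Mathlib

section
/- If a partition of a sequence into consecutive blocks has the property that each block requests at most k' distinct items, then each k'-phase of the sequence contains the final element of at least one block; hence the number of k'-phases is at most the number of blocks. -/
/-- Length of the maximal prefix of `r` containing at most `k` distinct items. -/
def maxPrefixLen {α : Type*} [DecidableEq α] (k : ℕ) (r : List α) : ℕ :=
  ((List.range (r.length + 1)).filter (fun n => (r.take n).dedup.length ≤ k)).foldr max 0

/-- Greedy phase partition, with fuel for termination. -/
def phasesAux {α : Type*} [DecidableEq α] (k : ℕ) : ℕ → List α → List (List α)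
  | 0, _ => []
  | _, [] => []
  | (fuel+1), r =>
      let n := max 1 (maxPrefixLen k r)
      r.take n :: phasesAux k fuel (r.drop n)

/-- The `k`-phase partition of `r`: greedy maximal consecutive blocks, each
containing requests to at most `k` distinct items. -/
def phases {α : Type*} [DecidableEq α] (k : ℕ) (r : List α) : List (List α) :=
  phasesAux k r.length r

/-- `L(k,r)`: the number of `k`-phases of `r`, minus 1. -/
def numPhases {α : Type*} [DecidableEq α] (k : ℕ) (r : List α) : ℕ :=
  (phases k r).length - 1

/-- For each `k`-phase other than the first, the number of new requests:
items requested in the phase but not in the previous phase. -/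
def newCounts {α : Type*} [DecidableEq α] (k : ℕ) (r : List α) : List ℕ :=
  ((phases k r).zip (phases k r).tail).map
    (fun p => (p.2.dedup.filter (fun x => x ∉ p.1)).length)

/-- `m(k,r)`: the average number of new requests per `k`-phase (other than the first). -/
noncomputable def avgNew {α : Type*} [DecidableEq α] (k : ℕ) (r : List α) : ℝ :=
  ((newCounts k r).sum : ℝ) / (numPhases k r : ℝ)

/-- Index in `r` at which the `i`-th `k`-phase starts. -/
def phaseStart {α : Type*} [DecidableEq α] (k : ℕ) (r : List α) (i : ℕ) : ℕ :=
  (((phases k r).take i).map List.length).sum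

/-! A `k'`-phase starting at a position `s` inside block `j` runs at least to the end of that
block: the rest of block `j` requests at most `k'` distinct items, and the greedy phase is the
longest such prefix of what remains. So every phase contains the last position of some block, and
since phases are consecutive and disjoint, the block so chosen strictly increases with the phase. -/

theorem List.Subset.length_dedup_le {α : Type*} [DecidableEq α] {l₁ l₂ : List α}
    (h : l₁ ⊆ l₂) : l₁.dedup.length ≤ l₂.dedup.length :=
  ((List.nodup_dedup l₁).subperm fun _ hx =>
    List.mem_dedup.2 (h (List.mem_dedup.1 hx))).length_le

theorem List.exists_sum_take_map_length_le_lt {α : Type*} (L : List (List α)) {s : ℕ}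
    (hs : s < L.flatten.length) :
    ∃ j < L.length, ((L.take j).map List.length).sum ≤ s ∧
      s < ((L.take (j + 1)).map List.length).sum := by
  induction L generalizing s with
  | nil => simp at hs
  | cons b L ih =>
    by_cases hsb : s < b.length
    · exact ⟨0, by simp, by simp, by simpa using hsb⟩
    · rw [List.flatten_cons, List.length_append] at hs
      obtain ⟨j, hj, hle, hlt⟩ := ih (s := s - b.length) (by omega)
      refine ⟨j + 1, by simpa using hj, ?_, ?_⟩ <;>
        simp only [List.take_succ_cons, List.map_cons, List.sum_cons] <;> omega

theorem List.exists_drop_take_flatten_suffix_getElem {α : Type*} (L : List (List α)) {s : ℕ}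
    (hs : s < L.flatten.length) :
    ∃ (j : ℕ) (hj : j < L.length), s < ((L.take (j + 1)).map List.length).sum ∧
      (L.flatten.take ((L.take (j + 1)).map List.length).sum).drop s <:+ L[j] := by
  obtain ⟨j, hj, hle, hlt⟩ := L.exists_sum_take_map_length_le_lt hs
  refine ⟨j, hj, hlt, ?_⟩
  rw [← L.drop_take_succ_flatten_eq_getElem j hj, ← List.map_take, ← List.map_take]
  obtain ⟨d, rfl⟩ := Nat.exists_eq_add_of_le hle
  rw [← List.drop_drop]
  exact List.drop_suffix _ _

theorem le_of_forall_lt_exists_mem_Ioc {f g : ℕ → ℕ} (hf : Monotone f) (hg : Monotone g)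
    {m n : ℕ} (h : ∀ p < m, ∃ j < n, g j ∈ Set.Ioc (f p) (f (p + 1))) : m ≤ n := by
  choose! j hjn hmem using h
  have hj : StrictMonoOn j (Set.Iio m) := by
    intro p hp q hq hpq
    by_contra! hqp
    have := (hmem p hp).2
    have := (hmem q hq).1
    have := hf (show p + 1 ≤ q by omega)
    have := hg hqp
    omega
  simpa using Finset.card_le_card_of_injOn (s := Finset.range m) (t := Finset.range n) j
    (fun p hp => by simpa using hjn p (by simpa using hp)) (by simpa using hj.injOn)

section Phases

variable {α : Type*} [DecidableEq α] {k : ℕ} {r : List α}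

theorem le_maxPrefixLen {n : ℕ} (hn : n ≤ r.length) (hk : (r.take n).dedup.length ≤ k) :
    n ≤ maxPrefixLen k r := by
  refine List.le_max_of_le' 0 ?_ le_rfl
  simpa [Nat.lt_succ_iff] using ⟨hn, hk⟩

theorem maxPrefixLen_le_length (k : ℕ) (r : List α) : maxPrefixLen k r ≤ r.length :=
  List.max_le_of_forall_le _ _ fun n hn => by
    simpa [Nat.lt_succ_iff] using (List.mem_filter.1 hn).1

theorem phasesAux_eq_of_length_le (k : ℕ) {f₁ f₂ : ℕ} (h₁ : r.length ≤ f₁)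
    (h₂ : r.length ≤ f₂) : phasesAux k f₁ r = phasesAux k f₂ r := by
  induction f₁ generalizing f₂ r with
  | zero =>
    obtain rfl : r = [] := List.eq_nil_of_length_eq_zero (by omega)
    cases f₂ <;> rfl
  | succ f ih =>
    match r, f₂ with
    | [], f₂ => cases f₂ <;> rfl
    | x :: xs, 0 => simp at h₂
    | x :: xs, f₂ + 1 =>
      simp only [phasesAux]
      have := le_max_left 1 (maxPrefixLen k (x :: xs))
      simp only [List.length_cons] at h₁ h₂
      exact congrArg _
        (ih (by simp only [List.length_drop, List.length_cons]; omega)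
          (by simp only [List.length_drop, List.length_cons]; omega))

theorem phases_nil (k : ℕ) : phases k ([] : List α) = [] := rfl

theorem phases_of_ne_nil (k : ℕ) (hr : r ≠ []) :
    phases k r = r.take (max 1 (maxPrefixLen k r)) ::
      phases k (r.drop (max 1 (maxPrefixLen k r))) := by
  obtain ⟨x, xs, rfl⟩ := List.exists_cons_of_ne_nil hr
  have := le_max_left 1 (maxPrefixLen k (x :: xs))
  simp only [phases, List.length_cons, phasesAux]
  exact congrArg _ (phasesAux_eq_of_length_le k
    (by simp only [List.length_drop, List.length_cons]; omega) le_rfl)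

theorem phases_drop_phaseStart (k : ℕ) (r : List α) (p : ℕ) :
    phases k (r.drop (phaseStart k r p)) = (phases k r).drop p := by
  induction p generalizing r with
  | zero => simp [phaseStart]
  | succ p ih =>
    rcases eq_or_ne r [] with rfl | hr
    · simp [phaseStart, phases_nil]
    set n := max 1 (maxPrefixLen k r)
    have hn : n ≤ r.length := max_le (List.length_pos_iff.2 hr) (maxPrefixLen_le_length k r)
    have hstart : phaseStart k r (p + 1) = n + phaseStart k (r.drop n) p := by
      simp [phaseStart, phases_of_ne_nil k hr, hn, n]
    rw [hstart, ← List.drop_drop, ih, phases_of_ne_nil k hr, List.drop_succ_cons]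

theorem phaseStart_mono (k : ℕ) (r : List α) : Monotone (phaseStart k r) := fun _ _ h => by
  simpa [phaseStart, List.map_take] using List.monotone_sum_take _ h

theorem phaseStart_lt_length {p : ℕ} (hp : p < (phases k r).length) :
    phaseStart k r p < r.length := by
  by_contra! h
  have := phases_drop_phaseStart k r p
  rw [List.drop_eq_nil_of_le h, phases_nil, eq_comm, List.drop_eq_nil_iff] at this
  omega

theorem getElem_phases {p : ℕ} (hp : p < (phases k r).length) :
    (phases k r)[p] = (r.drop (phaseStart k r p)).take
      (max 1 (maxPrefixLen k (r.drop (phaseStart k r p)))) := by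
  have h := phases_drop_phaseStart k r p
  rw [phases_of_ne_nil k (by simpa using phaseStart_lt_length hp),
    List.drop_eq_getElem_cons hp] at h
  exact (List.cons.inj h).1.symm

theorem phaseStart_succ {p : ℕ} (hp : p < (phases k r).length) :
    phaseStart k r (p + 1) = phaseStart k r p + (phases k r)[p].length := by
  rw [phaseStart, phaseStart, List.map_take, List.map_take,
    List.sum_take_succ _ _ (by simpa using hp), List.getElem_map]

theorem le_phaseStart_succ {p t : ℕ} (hp : p < (phases k r).length)
    (hst : phaseStart k r p ≤ t) (ht : t ≤ r.length)
    (hk : ((r.take t).drop (phaseStart k r p)).dedup.length ≤ k) :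
    t ≤ phaseStart k r (p + 1) := by
  rw [phaseStart_succ hp, getElem_phases hp, List.length_take, List.length_drop]
  set s := phaseStart k r p
  have : t - s ≤ maxPrefixLen k (r.drop s) :=
    le_maxPrefixLen (by simp; omega) (by rwa [← List.drop_take])
  have := le_max_right 1 (maxPrefixLen k (r.drop s))
  omega

end Phases

theorem phases_le_blocks_general {α : Type*} [DecidableEq α] (k' : ℕ) (r : List α)
    (blocks : List (List α)) (hjoin : blocks.flatten = r)
    (hdist : ∀ b ∈ blocks, b.dedup.length ≤ k') :
    (∀ p < (phases k' r).length, ∃ j < blocks.length,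
        phaseStart k' r p < ((blocks.take (j + 1)).map List.length).sum ∧
        ((blocks.take (j + 1)).map List.length).sum ≤ phaseStart k' r (p + 1)) ∧
    (phases k' r).length ≤ blocks.length := by
  subst hjoin
  have hends : Monotone fun j => ((blocks.take (j + 1)).map List.length).sum := fun i j h => by
    simpa only [List.map_take] using
      List.monotone_sum_take (blocks.map List.length) (Nat.succ_le_succ h)
  refine (fun hcover =>
    ⟨hcover, le_of_forall_lt_exists_mem_Ioc (phaseStart_mono k' _) hends hcover⟩) fun p hp => ?_
  obtain ⟨j, hj, hstart, hsuffix⟩ :=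
    blocks.exists_drop_take_flatten_suffix_getElem (phaseStart_lt_length hp)
  have hend : ((blocks.take (j + 1)).map List.length).sum ≤ blocks.flatten.length := by
    rw [← List.length_flatten]
    exact (List.take_sublist _ _).flatten.length_le
  exact ⟨j, hj, hstart, le_phaseStart_succ hp hstart.le hend
    (hsuffix.subset.length_dedup_le.trans (hdist _ (List.getElem_mem hj)))⟩

/-- if `r` is partitioned into consecutive nonempty blocks each
requesting at most `k'` distinct items, then every `k'`-phase contains the final
element of at least one block; hence there are at most as many `k'`-phases as
blocks. -/
theorem phases_le_blocks {α : Type*} [DecidableEq α] (k' : ℕ) (r : List α)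
    (blocks : List (List α)) (hjoin : blocks.flatten = r)
    (hne : ∀ b ∈ blocks, b ≠ [])
    (hdist : ∀ b ∈ blocks, b.dedup.length ≤ k') :
    (∀ p < (phases k' r).length, ∃ j < blocks.length,
        phaseStart k' r p < ((blocks.take (j + 1)).map List.length).sum ∧
        ((blocks.take (j + 1)).map List.length).sum ≤ phaseStart k' r (p + 1)) ∧
    (phases k' r).length ≤ blocks.length :=
  phases_le_blocks_general k' r blocks hjoin hdist
end

section
/- If at least half of the L phases p_1,...,p_L each contain at most 2m̄ new requests (where m̄ is the average number of new requests per phase), then merging each such phase with its predecessor (for alternate ones) yields a partition of the sequence into at most L − ⌈L/4⌉ consecutive blocks, each requesting at most k + 2m̄ distinct items. -/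
/-!
Merging a good phase `q` (one with at most `2m̄` new requests) into its predecessor `p` gives
a block with `|p| + (new requests of q) ≤ k + 2m̄` distinct items. Scan the phases from left to
right, merging each good phase into its predecessor unless that predecessor has just been merged
itself. A merge rules out at most one further good phase, so at least half of the at least `L/2`
good phases are merged and at least `⌈L/4⌉` blocks disappear.
-/

section Phases

variable {α : Type*} [DecidableEq α]

def numNew (p q : List α) : ℕ :=
  (q.dedup.filter (fun x => x ∉ p)).length

theorem length_dedup_append (p q : List α) :
    (p ++ q).dedup.length = p.dedup.length + numNew p q := by
  have hfilter : (q.dedup.filter (fun x => x ∉ p)).toFinset = q.toFinset \ p.toFinset := by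
    ext x; simp [and_comm]
  rw [numNew, ← List.card_toFinset, ← List.card_toFinset p,
    ← List.toFinset_card_of_nodup (q.nodup_dedup.filter _), hfilter, List.toFinset_append,
    Finset.union_comm, ← Finset.card_sdiff_add_card, add_comm]

theorem maxPrefixLen_mem (k : ℕ) (r : List α) :
    maxPrefixLen k r ∈
      (List.range (r.length + 1)).filter (fun n => (r.take n).dedup.length ≤ k) := by
  have hzero : 0 ∈
      (List.range (r.length + 1)).filter (fun n => (r.take n).dedup.length ≤ k) := by
    simp
  exact List.maximum_mem (List.foldr_max_of_ne_nil (List.ne_nil_of_mem hzero)).symm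

theorem length_dedup_take_maxPrefixLen_le (k : ℕ) (r : List α) :
    (r.take (maxPrefixLen k r)).dedup.length ≤ k := by
  simpa using (List.mem_filter.1 (maxPrefixLen_mem k r)).2

theorem one_le_maxPrefixLen {k : ℕ} (hk : 0 < k) {r : List α} (hr : r ≠ []) :
    1 ≤ maxPrefixLen k r := by
  have hlen : 0 < r.length := List.length_pos_iff.2 hr
  have hone : (r.take 1).dedup.length ≤ k :=
    ((List.dedup_sublist _).length_le.trans (List.length_take_le _ _)).trans hk
  exact List.le_max_of_le (List.mem_filter.2 ⟨List.mem_range.2 (by omega), by simpa using hone⟩)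
    le_rfl

theorem flatten_phasesAux (k : ℕ) :
    ∀ (fuel : ℕ) (r : List α), r.length ≤ fuel → (phasesAux k fuel r).flatten = r
  | 0, [], _ => rfl
  | _ + 1, [], _ => rfl
  | fuel + 1, a :: t, h => by
    simp only [phasesAux, List.flatten_cons]
    rw [flatten_phasesAux k fuel, List.take_append_drop]
    simp only [List.length_drop, List.length_cons] at h ⊢
    omega

theorem length_dedup_le_of_mem_phasesAux {k : ℕ} (hk : 0 < k) :
    ∀ (fuel : ℕ) (r : List α), ∀ p ∈ phasesAux k fuel r, p.dedup.length ≤ k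
  | 0, _, p, hp => by simp [phasesAux] at hp
  | _ + 1, [], p, hp => by simp [phasesAux] at hp
  | fuel + 1, a :: t, p, hp => by
    rcases List.mem_cons.1 hp with rfl | hp
    · rw [max_eq_right (one_le_maxPrefixLen hk (List.cons_ne_nil a t))]
      exact length_dedup_take_maxPrefixLen_le k _
    · exact length_dedup_le_of_mem_phasesAux hk fuel _ p hp

theorem flatten_phases (k : ℕ) (r : List α) : (phases k r).flatten = r :=
  flatten_phasesAux k r.length r le_rfl

theorem length_dedup_le_of_mem_phases {k : ℕ} (hk : 0 < k) {r p : List α}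
    (hp : p ∈ phases k r) : p.dedup.length ≤ k :=
  length_dedup_le_of_mem_phasesAux hk r.length r p hp

end Phases

section Merge

variable {α : Type*} (good : List α → List α → Prop) [DecidableRel good]

def mergeGoodPairs : List (List α) → List (List α)
  | [] => []
  | [p] => [p]
  | p :: q :: rest =>
      if good p q then (p ++ q) :: mergeGoodPairs rest else p :: mergeGoodPairs (q :: rest)

theorem flatten_mergeGoodPairs (l : List (List α)) :
    (mergeGoodPairs good l).flatten = l.flatten := by
  induction l using mergeGoodPairs.induct good with
  | case1 | case2 => rfl
  | case3 p q rest h ih => simp [mergeGoodPairs, h, ih]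
  | case4 p q rest h ih => simp [mergeGoodPairs, h, ih]

theorem forall_mem_mergeGoodPairs {S : List α → Prop} (l : List (List α))
    (hS : ∀ p ∈ l, S p) (hmerge : ∀ p ∈ l, ∀ q ∈ l, good p q → S (p ++ q)) :
    ∀ b ∈ mergeGoodPairs good l, S b := by
  induction l using mergeGoodPairs.induct good with
  | case1 => simp [mergeGoodPairs]
  | case2 p => simpa [mergeGoodPairs] using hS
  | case3 p q rest h ih =>
    simp only [mergeGoodPairs, if_pos h, List.forall_mem_cons]
    exact ⟨hmerge p (by simp) q (by simp) h,
      ih (fun x hx => hS x (by simp [hx]))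
        (fun x hx y hy => hmerge x (by simp [hx]) y (by simp [hy]))⟩
  | case4 p q rest h ih =>
    simp only [mergeGoodPairs, if_neg h, List.forall_mem_cons]
    exact ⟨hS p (by simp),
      ih (fun x hx => hS x (by simp [hx]))
        (fun x hx y hy => hmerge x (by simp [hx]) y (by simp [hy]))⟩

def countGoodPairs (l : List (List α)) : ℕ :=
  (l.zip l.tail).countP (fun pq => good pq.1 pq.2)

theorem countGoodPairs_cons_cons (p q : List α) (rest : List (List α)) :
    countGoodPairs good (p :: q :: rest) =
      countGoodPairs good (q :: rest) + if good p q then 1 else 0 := by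
  simp [countGoodPairs, List.countP_cons]

theorem countGoodPairs_cons_le (p : List α) (l : List (List α)) :
    countGoodPairs good (p :: l) ≤ countGoodPairs good l + 1 := by
  cases l with
  | nil => simp [countGoodPairs]
  | cons q rest => rw [countGoodPairs_cons_cons]; split <;> omega

theorem two_mul_length_mergeGoodPairs_add_countGoodPairs_le (l : List (List α)) :
    2 * (mergeGoodPairs good l).length + countGoodPairs good l ≤ 2 * l.length := by
  induction l using mergeGoodPairs.induct good with
  | case1 | case2 => simp [mergeGoodPairs, countGoodPairs]
  | case3 p q rest h ih =>
    have := countGoodPairs_cons_le good p (q :: rest)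
    have := countGoodPairs_cons_le good q rest
    simp only [mergeGoodPairs, if_pos h, List.length_cons]
    omega
  | case4 p q rest h ih =>
    simp only [mergeGoodPairs, if_neg h, countGoodPairs_cons_cons, List.length_cons] at ih ⊢
    omega

end Merge

theorem merge_phases_partition_general {α : Type*} [DecidableEq α] (k : ℕ) (hk : 0 < k)
    (r : List α)
    (hhalf : numPhases k r ≤
      2 * ((newCounts k r).countP (fun x => decide ((x : ℝ) ≤ 2 * avgNew k r)))) :
    ∃ blocks : List (List α), blocks.flatten = r ∧
      (∀ b ∈ blocks, (b.dedup.length : ℝ) ≤ (k : ℝ) + 2 * avgNew k r) ∧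
      blocks.length + (numPhases k r + 3) / 4 ≤ numPhases k r + 1 := by
  set c : ℝ := 2 * avgNew k r
  let good : List α → List α → Prop := fun p q => (numNew p q : ℝ) ≤ c
  have hc : 0 ≤ c := by simp only [c, avgNew]; positivity
  have hcount : (newCounts k r).countP (fun x => decide ((x : ℝ) ≤ c)) =
      countGoodPairs good (phases k r) := by
    -- `(x : ℝ)` in the statement coerces the list `newCounts k r` itself, through the list monad
    rw [show (newCounts k r : List ℝ) = (newCounts k r).map Nat.cast from
      List.flatMap_pure_eq_map _ _, newCounts, List.countP_map, List.countP_map]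
    rfl
  have hphase : ∀ p ∈ phases k r, (p.dedup.length : ℝ) ≤ k := fun p hp => by
    exact_mod_cast length_dedup_le_of_mem_phases hk hp
  refine ⟨mergeGoodPairs good (phases k r), ?_, ?_, ?_⟩
  · rw [flatten_mergeGoodPairs, flatten_phases]
  · refine forall_mem_mergeGoodPairs good _ (fun p hp => ?_) (fun p hp q _ hpq => ?_)
    · linarith [hphase p hp]
    · rw [length_dedup_append, Nat.cast_add]
      linarith [hphase p hp, show (numNew p q : ℝ) ≤ c from hpq]
  · have hmerge := two_mul_length_mergeGoodPairs_add_countGoodPairs_le good (phases k r)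
    have hnum : numPhases k r = (phases k r).length - 1 := rfl
    omega

/-- if at least half of the `L` phases after the first contain at
most `2m̄` new requests, then merging alternate such phases with their
predecessors yields a partition of `r` into consecutive blocks, each requesting
at most `k + 2m̄` distinct items, with at least `⌈L/4⌉` fewer blocks than the
`L+1` phases. -/
theorem merge_phases_partition {α : Type*} [DecidableEq α] (k : ℕ) (hk : 0 < k)
    (r : List α) (hL : 1 ≤ numPhases k r)
    (hhalf : numPhases k r ≤
      2 * ((newCounts k r).countP (fun x => decide ((x : ℝ) ≤ 2 * avgNew k r)))) :
    ∃ blocks : List (List α), blocks.flatten = r ∧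
      (∀ b ∈ blocks, (b.dedup.length : ℝ) ≤ (k : ℝ) + 2 * avgNew k r) ∧
      blocks.length + (numPhases k r + 3) / 4 ≤ numPhases k r + 1 :=
  merge_phases_partition_general k hk r hhalf
end
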